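/- arXiv:1412.0830 — 2 statements merged into one kernel-verified Lean document; each statement's English description precedes it below -/
import Mathlib

section
/- Let G be a simple graph, r a vertex of G, and k a natural number. Then the set of ends of G that are dominated by some vertex of the ball B_k(r) is a closed subset of the end space of G. -/
open SimpleGraph

variable {V : Type}

/-- `c` is a cut of `G`: the set of edges with one endvertex in `A` and the other outside `A`,
for some set of vertices `A`. -/
def IsCut (G : SimpleGraph V) (c : Set (Sym2 V)) : Prop :=
  ∃ A : Set V, c = {e | e ∈ G.edgeSet ∧ ∃ x y, e = s(x, y) ∧ x ∈ A ∧ y ∉ A}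

/-- A set of edges is finitely coverable if some finite vertex set meets all its edges. -/
def FinitelyCoverable (c : Set (Sym2 V)) : Prop :=
  ∃ S : Set V, S.Finite ∧ ∀ e ∈ c, ∃ v ∈ S, v ∈ e

/-- `F` meets `X` evenly: their intersection is finite of even cardinality. -/
def MeetsEvenly (F X : Set (Sym2 V)) : Prop :=
  (F ∩ X).Finite ∧ Even (F ∩ X).ncard

/-- The edge `e` lies in the connected component `C` of `H`:
both endvertices of `e` belong to `C`. -/
def EdgeInComp (H : SimpleGraph V) (C : H.ConnectedComponent) (e : Sym2 V) : Prop :=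
  ∀ v ∈ e, H.connectedComponentMk v = C

/-- `F` is geometrically connected in `G`: `F` meets every finitely coverable cut `b`
such that two distinct components of `G` minus (the edges of) `b` contain edges of `F`. -/
def GeomConnected (G : SimpleGraph V) (F : Set (Sym2 V)) : Prop :=
  ∀ b : Set (Sym2 V), IsCut G b → FinitelyCoverable b →
    (∃ C D : (G.deleteEdges b).ConnectedComponent, C ≠ D ∧
      (∃ e ∈ F, EdgeInComp (G.deleteEdges b) C e) ∧
      (∃ f ∈ F, EdgeInComp (G.deleteEdges b) D f)) →
    (F ∩ b).Nonempty

/-- The vertex set (in `V`) of a connected component of an induced subgraph. -/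
def compSet (G : SimpleGraph V) {A : Set V} (C : (G.induce A).ConnectedComponent) : Set V :=
  Subtype.val '' C.supp

/-- The set of ends of `G`: compatible choices of a connected component of `G - S`
for every finite vertex set `S`. -/
def EndsOf (G : SimpleGraph V) :
    Set (∀ S : Finset V, (G.induce ((↑S : Set V)ᶜ)).ConnectedComponent) :=
  {ω | ∀ ⦃S S' : Finset V⦄, S ⊆ S' → compSet G (ω S') ⊆ compSet G (ω S)}

/-- An end of `G`. As a subspace of the product of the (discrete) sets of components,
this also carries the topology of the end space. -/
abbrev GraphEnd (G : SimpleGraph V) := ↥(EndsOf G)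

/-- The end `ω` lies in the closure of the edge set `F`: for every finite vertex set `S`
some edge of `F` has an endvertex in `ω(S)`. -/
def EndInClosure (G : SimpleGraph V) (ω : GraphEnd G) (F : Set (Sym2 V)) : Prop :=
  ∀ S : Finset V, ∃ e ∈ F, ∃ v ∈ e, v ∈ compSet G (ω.1 S)

/-- The vertex `v` dominates the end `ω`: for every finite vertex set `S` not containing `v`,
`v` has a neighbour in `ω(S)`. -/
def Dominates (G : SimpleGraph V) (v : V) (ω : GraphEnd G) : Prop :=
  ∀ S : Finset V, v ∉ S → ∃ w, G.Adj v w ∧ w ∈ compSet G (ω.1 S)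

/-- The sets of connected components carry the discrete topology; the end space is then
a subspace of the product of these discrete spaces. -/
instance (priority := 100) {α : Type} (H : SimpleGraph α) :
    TopologicalSpace H.ConnectedComponent := ⊥

/-- A ray in `G`: an injective sequence of vertices in which consecutive vertices
are adjacent. -/
def IsRay (G : SimpleGraph V) (R : ℕ → V) : Prop :=
  Function.Injective R ∧ ∀ n, G.Adj (R n) (R (n + 1))

/-- The ball of radius `k` around `r`: all vertices joined to `r` by a walk
of length at most `k`. -/
def ball (G : SimpleGraph V) (r : V) (k : ℕ) : Set V :=
  {v | ∃ p : G.Walk r v, p.length ≤ k}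

lemma mem_compSet_iff {G : SimpleGraph V} {A : Set V} {C : (G.induce A).ConnectedComponent}
    {x : V} : x ∈ compSet G C ↔
      ∃ hx : x ∈ A, (G.induce A).connectedComponentMk ⟨x, hx⟩ = C := by
  constructor
  · rintro ⟨⟨y, hy⟩, hmem, rfl⟩
    exact ⟨hy, (ConnectedComponent.mem_supp_iff _ _).mp hmem⟩
  · rintro ⟨hx, h⟩
    exact ⟨⟨x, hx⟩, (ConnectedComponent.mem_supp_iff _ _).mpr h, rfl⟩

lemma compSet_nonempty {G : SimpleGraph V} {A : Set V} (C : (G.induce A).ConnectedComponent) :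
    (compSet G C).Nonempty := by
  obtain ⟨v, hv⟩ := C.exists_rep
  exact ⟨v.1, mem_compSet_iff.mpr ⟨v.2, hv⟩⟩

lemma compSet_subset {G : SimpleGraph V} {A : Set V} {C : (G.induce A).ConnectedComponent} :
    compSet G C ⊆ A := by
  rintro x ⟨y, _, rfl⟩; exact y.2

lemma compSet_unique {G : SimpleGraph V} {A : Set V} {C D : (G.induce A).ConnectedComponent}
    {x : V} (hC : x ∈ compSet G C) (hD : x ∈ compSet G D) : C = D := by
  rw [mem_compSet_iff] at hC hD
  obtain ⟨h1, e1⟩ := hC; obtain ⟨h2, e2⟩ := hD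
  rw [← e1, ← e2]

lemma mem_compSet_of_adj {G : SimpleGraph V} {A : Set V} {C : (G.induce A).ConnectedComponent}
    {u w : V} (hw : w ∈ compSet G C) (hu : u ∈ A) (h : G.Adj u w) : u ∈ compSet G C := by
  rw [mem_compSet_iff] at hw ⊢
  obtain ⟨hwA, hmk⟩ := hw
  refine ⟨hu, ?_⟩
  rw [← hmk]
  have hadj : (G.induce A).Adj ⟨u, hu⟩ ⟨w, hwA⟩ := by simpa using h
  exact ConnectedComponent.sound hadj.reachable

lemma end_agree {G : SimpleGraph V} {ω ω' : GraphEnd G} {T S : Finset V} (hTS : T ⊆ S)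
    (h : ω.1 S = ω'.1 S) : ω.1 T = ω'.1 T := by
  obtain ⟨x, hx⟩ := compSet_nonempty (ω.1 S)
  exact compSet_unique (ω.2 hTS hx) (ω'.2 hTS (h ▸ hx))

lemma exists_adj_of_mem {G : SimpleGraph V} {ω : GraphEnd G} {T : Finset V} {v : V}
    (hv : v ∈ compSet G (ω.1 T)) : ∃ w, G.Adj v w ∧ w ∈ compSet G (ω.1 T) := by
  classical
  obtain ⟨z, hz⟩ := compSet_nonempty (ω.1 (T ∪ {v}))
  have hzT : z ∈ compSet G (ω.1 T) := ω.2 Finset.subset_union_left hz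
  have hzv : z ≠ v := by
    have := compSet_subset hz
    simp only [Finset.coe_union, Finset.coe_singleton, Set.mem_compl_iff, Set.mem_union,
      Set.mem_singleton_iff] at this
    exact fun h => this (Or.inr h)
  rw [mem_compSet_iff] at hv hzT
  obtain ⟨hvA, hvmk⟩ := hv
  obtain ⟨hzA, hzmk⟩ := hzT
  have hreach := ConnectedComponent.exact (hvmk.trans hzmk.symm)
  obtain ⟨p⟩ := hreach
  have hne : (⟨v, hvA⟩ : ((↑T : Set V)ᶜ : Set V)) ≠ ⟨z, hzA⟩ :=
    fun h => hzv (congrArg Subtype.val h).symm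
  obtain ⟨b, hadj, q, -⟩ := (Walk.not_nil_iff).mp (Walk.not_nil_of_ne (p := p) hne)
  have hadj' : G.Adj v b.1 := by
    have := hadj
    simp only [comap_adj, Function.Embedding.coe_subtype] at this
    exact this
  refine ⟨b.1, hadj', ?_⟩
  rw [mem_compSet_iff]
  exact ⟨b.2, by rw [← hvmk]; exact ConnectedComponent.sound hadj.symm.reachable⟩

lemma r_mem_ball (G : SimpleGraph V) (r : V) (k : ℕ) : r ∈ _root_.ball G r k :=
  ⟨Walk.nil, by simp⟩

lemma ball_mono {G : SimpleGraph V} {r : V} {m n : ℕ} (h : m ≤ n) :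
    _root_.ball G r m ⊆ _root_.ball G r n := by
  rintro v ⟨p, hp⟩; exact ⟨p, hp.trans h⟩

lemma ball_zero {G : SimpleGraph V} {r v : V} (h : v ∈ _root_.ball G r 0) : v = r := by
  obtain ⟨p, hp⟩ := h
  exact (Walk.eq_of_length_eq_zero (Nat.le_zero.mp hp)).symm

lemma ball_succ {G : SimpleGraph V} {r v : V} {m : ℕ} (h : v ∈ _root_.ball G r (m + 1)) :
    v = r ∨ ∃ u ∈ _root_.ball G r m, G.Adj u v := by
  obtain ⟨p, hp⟩ := h
  have hq : p.reverse.length ≤ m + 1 := by rwa [Walk.length_reverse]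
  generalize p.reverse = q at hq
  cases q with
  | nil => exact Or.inl rfl
  | cons h q' =>
    refine Or.inr ⟨_, ⟨q'.reverse, ?_⟩, h.symm⟩
    rw [Walk.length_reverse]
    simpa using hq

lemma pigeon (S₀ : Finset V) (f : Finset V → V) (hf : ∀ S, S₀ ⊆ S → f S ∈ S₀) :
    ∃ u ∈ S₀, ∀ T : Finset V, ∃ S, S₀ ⊆ S ∧ T ⊆ S ∧ f S = u := by
  classical
  by_contra hcon
  push_neg at hcon
  choose! g hg using hcon
  set S : Finset V := S₀ ∪ S₀.sup g with hS
  have h1 : S₀ ⊆ S := Finset.subset_union_left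
  have h2 : f S ∈ S₀ := hf S h1
  exact hg (f S) h2 S h1 ((Finset.le_sup h2).trans Finset.subset_union_right) rfl

instance {α : Type} (H : SimpleGraph α) : DiscreteTopology H.ConnectedComponent := ⟨rfl⟩

lemma closure_char {G : SimpleGraph V} {D : Set (GraphEnd G)} {ω : GraphEnd G}
    (hω : ω ∈ closure D) (S : Finset V) : ∃ ω' ∈ D, ω'.1 S = ω.1 S := by
  have hc : Continuous (fun x : GraphEnd G => x.1 S) :=
    (continuous_apply S).comp continuous_subtype_val
  have hopen : IsOpen {x : GraphEnd G | x.1 S = ω.1 S} := by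
    exact hc.isOpen_preimage {ω.1 S} (isOpen_discrete _)
  obtain ⟨x, hx1, hx2⟩ := mem_closure_iff.mp hω _ hopen rfl
  exact ⟨x, hx2, hx1⟩

lemma dominates_cofinal {G : SimpleGraph V} {ω : GraphEnd G} {u : V}
    (h : ∀ T : Finset V, ∃ S, T ⊆ S ∧ ∃ w ∈ compSet G (ω.1 S), G.Adj u w) :
    Dominates G u ω := by
  intro T _
  obtain ⟨S, hTS, w, hw, hadj⟩ := h T
  exact ⟨w, hadj, ω.2 hTS hw⟩

lemma key (G : SimpleGraph V) (r : V) (ω : GraphEnd G) (m : ℕ)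
    (hyp : ∀ S : Finset V, ∃ u ∈ _root_.ball G r m,
      u ∈ compSet G (ω.1 S) ∨ ∃ w ∈ compSet G (ω.1 S), G.Adj u w) :
    ∃ u ∈ _root_.ball G r m, Dominates G u ω := by
  induction m with
  | zero =>
    refine ⟨r, r_mem_ball G r 0, ?_⟩
    intro T _
    obtain ⟨u, hub, hc⟩ := hyp T
    obtain rfl := ball_zero hub
    rcases hc with hmem | ⟨w, hw, hadj⟩
    · exact exists_adj_of_mem hmem
    · exact ⟨w, hadj, hw⟩
  | succ m ih =>
    by_cases hQ : ∀ S : Finset V, ∃ u ∈ _root_.ball G r m,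
        u ∈ compSet G (ω.1 S) ∨ ∃ w ∈ compSet G (ω.1 S), G.Adj u w
    · obtain ⟨u, hu, hd⟩ := ih hQ
      exact ⟨u, ball_mono (Nat.le_succ m) hu, hd⟩
    · obtain ⟨S₀, hS₀⟩ := not_forall.mp hQ
      have hQmono : ∀ S : Finset V, S₀ ⊆ S → ¬ ∃ u ∈ _root_.ball G r m,
          u ∈ compSet G (ω.1 S) ∨ ∃ w ∈ compSet G (ω.1 S), G.Adj u w := by
        rintro S hsub ⟨u, hu, hc⟩
        refine hS₀ ⟨u, hu, ?_⟩
        rcases hc with h | ⟨w, hw, ha⟩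
        · exact Or.inl (ω.2 hsub h)
        · exact Or.inr ⟨w, ω.2 hsub hw, ha⟩
      have hnotmem : ∀ u' ∈ _root_.ball G r (m + 1), ∀ S' : Finset V, S₀ ⊆ S' →
          u' ∉ compSet G (ω.1 S') := by
        intro u' hu' S' hs hmem
        rcases ball_succ hu' with rfl | ⟨y, hy, hadj⟩
        · exact hQmono S' hs ⟨u', r_mem_ball G u' m, Or.inl hmem⟩
        · exact hQmono S' hs ⟨y, hy, Or.inr ⟨u', hmem, hadj⟩⟩
      have claim : ∀ S : Finset V, S₀ ⊆ S → ∃ u, u ∈ S₀ ∧ u ∈ _root_.ball G r (m + 1) ∧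
          ∃ w ∈ compSet G (ω.1 S), G.Adj u w := by
        intro S hsub
        obtain ⟨u, hub, hc⟩ := hyp S
        obtain ⟨w, hw, hadj⟩ := hc.resolve_left (hnotmem u hub S hsub)
        refine ⟨u, ?_, hub, w, hw, hadj⟩
        by_contra hnot
        have hw₀ : w ∈ compSet G (ω.1 S₀) := ω.2 hsub hw
        have humem : u ∈ compSet G (ω.1 S₀) :=
          mem_compSet_of_adj hw₀ (by simpa using hnot) hadj
        exact hnotmem u hub S₀ (subset_refl _) humem
      have : Inhabited V := ⟨r⟩
      choose! g hg₁ hg₂ hg₃ using claim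
      obtain ⟨u, huS₀, hcof⟩ := pigeon S₀ g hg₁
      obtain ⟨S₁, hs₁, -, he₁⟩ := hcof ∅
      refine ⟨u, he₁ ▸ hg₂ S₁ hs₁, dominates_cofinal ?_⟩
      intro T
      obtain ⟨S, hs, hTs, he⟩ := hcof T
      exact ⟨S, hTs, he ▸ hg₃ S hs⟩

/-- **Lemma.** The set of ends dominated by some vertex of the ball $B_k(r)$ is closed
in the end space. -/
theorem dominated_by_ball_is_closed (G : SimpleGraph V) (r : V) (k : ℕ) :
    IsClosed {ω : GraphEnd G | ∃ v ∈ _root_.ball G r k, Dominates G v ω} := by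
  refine isClosed_of_closure_subset ?_
  intro ω hω
  have hbasic : ∀ S : Finset V, ∃ ω' : GraphEnd G,
      (∃ v ∈ _root_.ball G r k, Dominates G v ω') ∧ ω'.1 S = ω.1 S := by
    intro S
    obtain ⟨ω', h1, h2⟩ := closure_char hω S
    exact ⟨ω', h1, h2⟩
  choose f hf hfS using hbasic
  choose v hv hvdom using hf
  by_cases hcase : ∃ S₀ : Finset V, ∀ S, S₀ ⊆ S → v S ∈ S₀
  · obtain ⟨S₀, h⟩ := hcase
    obtain ⟨u, huS₀, hcof⟩ := pigeon S₀ v h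
    obtain ⟨S₁, hs₁, -, he₁⟩ := hcof ∅
    refine ⟨u, he₁ ▸ hv S₁, ?_⟩
    intro T hT
    obtain ⟨S, hS₀S, hTS, hvu⟩ := hcof T
    obtain ⟨w, hadj, hw⟩ := (hvu ▸ hvdom S) T hT
    have hagree : (f S).1 T = ω.1 T := end_agree hTS (hfS S)
    exact ⟨w, hadj, hagree ▸ hw⟩
  · push_neg at hcase
    apply key G r ω k
    intro S
    obtain ⟨S', hSS', hvS'⟩ := hcase S
    obtain ⟨w, hadj, hw⟩ := hvdom S' S hvS'
    have hagree : (f S').1 S = ω.1 S := end_agree hSS' (hfS S')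
    exact ⟨v S', hv S', Or.inr ⟨w, hagree ▸ hw, hadj⟩⟩
end

section
/- Let G be a simple graph and let o be an edge set that meets every finitely coverable cut evenly and is geometrically connected. Then for every finite vertex set W only finitely many components of G − W contain an endvertex of an edge of o. -/
open SimpleGraph

variable {V : Type}

-- aux lemmas
lemma mem_compSet {G : SimpleGraph V} {A : Set V} {C : (G.induce A).ConnectedComponent} {v : V} :
    v ∈ compSet G C ↔ ∃ h : v ∈ A, (G.induce A).connectedComponentMk ⟨v, h⟩ = C := by
  constructor
  · rintro ⟨⟨v, hv⟩, hc, rfl⟩; exact ⟨hv, hc⟩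
  · rintro ⟨h, hc⟩; exact ⟨⟨v, h⟩, hc, rfl⟩

lemma compSet_single {G : SimpleGraph V} {A : Set V} {v : V}
    {C D : (G.induce A).ConnectedComponent} (h1 : v ∈ compSet G C) (h2 : v ∈ compSet G D) :
    C = D := by
  obtain ⟨h, hc⟩ := mem_compSet.1 h1
  obtain ⟨h', hd⟩ := mem_compSet.1 h2
  rw [← hc, ← hd]

lemma adj_mem_compSet {G : SimpleGraph V} {A : Set V} {C : (G.induce A).ConnectedComponent}
    {v w : V} (hv : v ∈ compSet G C) (hw : w ∈ A) (hadj : G.Adj v w) :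
    w ∈ compSet G C := by
  obtain ⟨h, hc⟩ := mem_compSet.1 hv
  refine mem_compSet.2 ⟨hw, ?_⟩
  rw [← hc]
  exact ConnectedComponent.sound ((show (G.induce A).Adj ⟨w, hw⟩ ⟨v, h⟩ from hadj.symm).reachable)

lemma walk_closed {K : SimpleGraph V} {T : Set V}
    (hT : ∀ u w, u ∈ T → K.Adj u w → w ∈ T) :
    ∀ {u w : V}, K.Walk u w → u ∈ T → w ∈ T := by
  intro u w p
  induction p with
  | nil => exact id
  | cons h _ ih => intro hu; exact ih (hT _ _ hu h)

/-- **Corollary.** If o meets every finitely coverable cut evenly and is geometrically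
connected, then for every finite W only finitely many components of G - W contain
an endvertex of an edge of o. -/
theorem geom_connected_locally_finite_components (G : SimpleGraph V) (o : Set (Sym2 V))
    (ho : o ⊆ G.edgeSet)
    (heven : ∀ c, IsCut G c → FinitelyCoverable c → MeetsEvenly o c)
    (hgeo : GeomConnected G o) :
    ∀ W : Finset V,
      {C : (G.induce ((↑W : Set V)ᶜ)).ConnectedComponent |
        ∃ e ∈ o, ∃ v ∈ e, v ∈ compSet G C}.Finite := by
  intro W
  by_contra hInf
  replace hInf : {C : (G.induce ((↑W : Set V)ᶜ)).ConnectedComponent |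
      ∃ e ∈ o, ∃ v ∈ e, v ∈ compSet G C}.Infinite := hInf
  set A : Set V := (↑W : Set V)ᶜ with hA
  -- Step 1: the edges of o touching W form a finite set
  set cW : Set (Sym2 V) := {e | e ∈ G.edgeSet ∧ ∃ x y, e = s(x, y) ∧ x ∈ (↑W : Set V) ∧ y ∉ (↑W : Set V)} with hcW
  have hfin1 : (o ∩ cW).Finite := by
    refine (heven cW ⟨↑W, rfl⟩ ⟨↑W, W.finite_toSet, ?_⟩).1
    rintro e ⟨_, x, y, rfl, hx, -⟩
    exact ⟨x, hx, Sym2.mem_mk_left x y⟩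
  set oW : Set (Sym2 V) := {e ∈ o | ∃ v ∈ e, v ∈ (↑W : Set V)} with hoWdef
  have hoWfin : oW.Finite := by
    have hsub : oW ⊆ (o ∩ cW) ∪ ((fun p : V × V => Sym2.mk p.1 p.2) '' ((↑W : Set V) ×ˢ (↑W : Set V))) := by
      rintro e ⟨heo, v, hve, hvW⟩
      obtain ⟨u, rfl⟩ := Sym2.mem_iff_exists.1 hve
      by_cases hu : u ∈ (↑W : Set V)
      · exact Or.inr ⟨(v, u), ⟨hvW, hu⟩, rfl⟩
      · exact Or.inl ⟨heo, ho heo, v, u, rfl, hvW, hu⟩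
    exact (hfin1.union ((W.finite_toSet.prod W.finite_toSet).image _)).subset hsub
  -- Step 2: the set of components touched by oW is finite
  set bad : Set ((G.induce A).ConnectedComponent) :=
    ⋃ e ∈ oW, {C | ∃ v ∈ e, v ∈ compSet G C} with hbad
  have hbadfin : bad.Finite := by
    refine Set.Finite.biUnion hoWfin ?_
    intro e _
    induction e using Sym2.ind with
    | _ x y =>
      have : {C : (G.induce A).ConnectedComponent | ∃ v ∈ s(x, y), v ∈ compSet G C} ⊆
          {C | x ∈ compSet G C} ∪ {C | y ∈ compSet G C} := by
        rintro C ⟨v, hv, hvc⟩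
        rcases Sym2.mem_iff.1 hv with rfl | rfl
        · exact Or.inl hvc
        · exact Or.inr hvc
      refine Set.Finite.subset (Set.Finite.union ?_ ?_) this <;>
        exact Set.Subsingleton.finite (fun C hC D hD => compSet_single hC hD)
  -- Step 3: pick two good components
  have hInf2 : ({C : (G.induce A).ConnectedComponent |
      ∃ e ∈ o, ∃ v ∈ e, v ∈ compSet G C} \ bad).Infinite := hInf.diff hbadfin
  obtain ⟨C, hC⟩ := hInf2.nonempty
  obtain ⟨D, hD⟩ := (hInf2.diff (Set.finite_singleton C)).nonempty
  have hCD : C ≠ D := fun h => hD.2 (by simp [h])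
  have hD' := hD.1
  -- each good component contains a full edge of o
  have key : ∀ E : (G.induce A).ConnectedComponent,
      E ∈ {C : (G.induce A).ConnectedComponent | ∃ e ∈ o, ∃ v ∈ e, v ∈ compSet G C} \ bad →
      ∃ p q, G.Adj p q ∧ s(p, q) ∈ o ∧ p ∈ compSet G E ∧ q ∈ compSet G E := by
    rintro E ⟨⟨e, heo, v, hve, hvc⟩, hnb⟩
    obtain ⟨u, rfl⟩ := Sym2.mem_iff_exists.1 hve
    have hadj : G.Adj v u := ho heo
    have hnotW : ∀ w ∈ s(v, u), w ∉ (↑W : Set V) := by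
      intro w hw hwW
      exact hnb (Set.mem_biUnion ⟨heo, w, hw, hwW⟩ ⟨v, hve, hvc⟩)
    have huA : u ∈ A := hnotW u (Sym2.mem_mk_right v u)
    exact ⟨v, u, hadj, heo, hvc, adj_mem_compSet hvc huA hadj⟩
  obtain ⟨p, q, hpq, hpqo, hpc, hqc⟩ := key C hC
  obtain ⟨r, t, hrt, hrto, hrc, htc⟩ := key D hD'
  -- Step 4: the cut around compSet C
  set b : Set (Sym2 V) :=
    {e | e ∈ G.edgeSet ∧ ∃ x y, e = s(x, y) ∧ x ∈ compSet G C ∧ y ∉ compSet G C} with hb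
  have hbW : ∀ e ∈ b, ∃ x y, e = s(x, y) ∧ x ∈ compSet G C ∧ y ∈ (↑W : Set V) := by
    rintro e ⟨hee, x, y, rfl, hx, hy⟩
    refine ⟨x, y, rfl, hx, ?_⟩
    by_contra hyW
    exact hy (adj_mem_compSet hx hyW hee)
  set K := G.deleteEdges b with hK
  -- compSet C is closed under K-adjacency
  have hclosed : ∀ u w, u ∈ compSet G C → K.Adj u w → w ∈ compSet G C := by
    intro u w hu hadj
    by_contra hw
    exact (deleteEdges_adj.1 hadj).2 ⟨(deleteEdges_adj.1 hadj).1, u, w, rfl, hu, hw⟩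
  -- edges with both endpoints in a compSet survive in K and lie in one component
  have hsurvive : ∀ x y, G.Adj x y → x ∈ compSet G C → y ∈ compSet G C → K.Adj x y := by
    intro x y hxy hx hy
    refine deleteEdges_adj.2 ⟨hxy, ?_⟩
    rintro ⟨-, a, c, hac, ha, hc⟩
    rcases Sym2.eq_iff.1 hac with ⟨rfl, rfl⟩ | ⟨rfl, rfl⟩
    · exact hc hy
    · exact hc hx
  -- similarly for D: K.Adj r t
  have hDsurvive : K.Adj r t := by
    refine deleteEdges_adj.2 ⟨hrt, ?_⟩
    rintro ⟨-, a, c, hac, ha, hc⟩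
    have hCD' : ∀ w, w ∈ compSet G D → w ∉ compSet G C := by
      intro w hwD hwC
      exact hCD (compSet_single hwC hwD)
    rcases Sym2.eq_iff.1 hac with ⟨rfl, rfl⟩ | ⟨rfl, rfl⟩
    · exact hCD' _ hrc ha
    · exact hCD' _ htc ha
  have hne : K.connectedComponentMk p ≠ K.connectedComponentMk r := by
    intro h
    obtain ⟨w⟩ := ConnectedComponent.exact h
    have : r ∈ compSet G C := walk_closed hclosed w hpc
    exact hCD (compSet_single this hrc)
  have hmain := hgeo b ⟨compSet G C, rfl⟩
    ⟨↑W, W.finite_toSet, by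
      intro e he
      obtain ⟨x, y, rfl, -, hyW⟩ := hbW e he
      exact ⟨y, hyW, Sym2.mem_mk_right x y⟩⟩
    ⟨K.connectedComponentMk p, K.connectedComponentMk r, hne,
      ⟨s(p, q), hpqo, by
        intro v hv
        rcases Sym2.mem_iff.1 hv with rfl | rfl
        · rfl
        · exact ConnectedComponent.sound (hsurvive p v hpq hpc hqc).symm.reachable⟩,
      ⟨s(r, t), hrto, by
        intro v hv
        rcases Sym2.mem_iff.1 hv with rfl | rfl
        · rfl
        · exact ConnectedComponent.sound hDsurvive.symm.reachable⟩⟩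
  obtain ⟨e, heo, heb⟩ := hmain
  obtain ⟨x, y, rfl, hx, hyW⟩ := hbW e heb
  exact hC.2 (Set.mem_biUnion ⟨heo, y, Sym2.mem_mk_right x y, hyW⟩
    ⟨x, Sym2.mem_mk_left x y, hx⟩)
end
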